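/- Let n > K ≥ 1 be integers, C > 0, and let r_1, …, r_n ∈ [0, C] be fixed rewards. Let g : ℝ → ℝ be a differentiable surjection with g′(x) ≥ c > 0 for all x. Let J ≥ 1, α ∈ ℝ^J with α ≠ 0, σ ∈ ℝ^J with σ_j > 0, and let (ε_{i,j})_{i≤n, j≤J} be a jointly independent family of real random variables, each with mean zero and E[exp(t ε_{i,j})] ≤ exp(σ_j² t²/2) for all t ∈ ℝ. Define evaluations f_{i,j} = g(α_j r_i) + ε_{i,j}, weights w⁺_j = (α_j/σ_j²)/‖α·σ⁻¹‖², and estimated rewards r̂_i = ∑_{j=1}^J w⁺_j g⁻¹(f_{i,j}). Let A⋆ be a K-element subset of {1,…,n} maximizing ∑_{i∈A} r_i. Then for any δ ∈ (0,1), with probability at least 1 − δ, every K-element subset A⁺ of {1,…,n} maximizing ∑_{i∈A} r̂_i satisfies ∑_{i∈A⋆} r_i − ∑_{i∈A⁺} r_i ≤ (2K/(c·‖α·σ⁻¹‖)) · √(2 J ln(2nJ/δ)). -/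

import Mathlib

/-!
Let `L = ln (2nJ/δ)`. By the sub-Gaussian Chernoff bound and a union bound over the `nJ` pairs,
with probability at least `1 - δ` every noise satisfies `|ε_{i,j}| < σ_j √(2L)`. On that event,
since `g` grows at rate at least `c`, `g⁻¹(f_{i,j})` is within `σ_j √(2L) / c` of `α_j r_i`; as
`∑ w⁺_j α_j = 1`, Cauchy–Schwarz gives `|r̂_i - r_i| ≤ √(2JL) / (c ‖α·σ⁻¹‖)` for every arm.
Because `A⁺` beats `A⋆` for `r̂`, it loses at most `2K` such errors against `A⋆` for `r`.
-/

open Finset MeasureTheory ProbabilityTheory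
open scoped NNReal

namespace ProbabilityTheory.HasSubgaussianMGF

variable {Ω ι : Type*} [MeasurableSpace Ω] {μ : Measure Ω}

lemma measureReal_abs_ge_le [IsFiniteMeasure μ] {X : Ω → ℝ} {c : ℝ≥0}
    (h : HasSubgaussianMGF X c μ) {s : ℝ} (hs : 0 ≤ s) :
    μ.real {ω | s ≤ |X ω|} ≤ 2 * Real.exp (-s ^ 2 / (2 * c)) := by
  have hsplit : {ω | s ≤ |X ω|} = {ω | s ≤ X ω} ∪ {ω | s ≤ (-X) ω} := by
    ext ω; simp only [Set.mem_ofPred_eq, Set.mem_union, Pi.neg_apply, le_abs, le_neg]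
  calc μ.real {ω | s ≤ |X ω|} ≤ μ.real {ω | s ≤ X ω} + μ.real {ω | s ≤ (-X) ω} :=
        hsplit ▸ measureReal_union_le _ _
    _ ≤ _ := by linarith [h.measure_ge_le hs, h.neg.measure_ge_le hs]

lemma one_sub_sum_le_measureReal_forall_abs_lt [IsProbabilityMeasure μ] [Fintype ι]
    {X : ι → Ω → ℝ} {c : ι → ℝ≥0} (h : ∀ p, HasSubgaussianMGF (X p) (c p) μ)
    {s : ι → ℝ} (hs : ∀ p, 0 ≤ s p) :
    1 - ∑ p, 2 * Real.exp (-s p ^ 2 / (2 * c p)) ≤ μ.real {ω | ∀ p, |X p ω| < s p} := by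
  set E := {ω | ∀ p, |X p ω| < s p}
  have hcompl : Eᶜ = ⋃ p, {ω | s p ≤ |X p ω|} := by ext ω; simp [E]
  have hunion : μ.real Eᶜ ≤ ∑ p, 2 * Real.exp (-s p ^ 2 / (2 * c p)) :=
    hcompl ▸ (measureReal_iUnion_fintype_le _).trans
      (sum_le_sum fun p _ => (h p).measureReal_abs_ge_le (hs p))
  have hcover : 1 ≤ μ.real E + μ.real Eᶜ := by
    simpa [Set.union_compl_self] using measureReal_union_le (μ := μ) E Eᶜ
  linarith

lemma ofReal_one_sub_le_measure_forall_abs_lt [IsProbabilityMeasure μ] [Fintype ι] [Nonempty ι]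
    {X : ι → Ω → ℝ} {σ : ι → ℝ} (h : ∀ p, HasSubgaussianMGF (X p) (σ p ^ 2).toNNReal μ)
    (hσ : ∀ p, 0 < σ p) {δ : ℝ} (hδ0 : 0 < δ) (hδ1 : δ ≤ 1) :
    ENNReal.ofReal (1 - δ) ≤
      μ {ω | ∀ p, |X p ω| < σ p * √(2 * Real.log (2 * Fintype.card ι / δ))} := by
  set L := Real.log (2 * Fintype.card ι / δ)
  have hcard : (1 : ℝ) ≤ Fintype.card ι := by exact_mod_cast Fintype.card_pos
  have hL : 0 ≤ L := Real.log_nonneg (by rw [le_div_iff₀ hδ0]; linarith)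
  have hterm : ∀ p, 2 * Real.exp (-(σ p * √(2 * L)) ^ 2 / (2 * (σ p ^ 2).toNNReal)) =
      δ / Fintype.card ι := fun p => by
    have := hσ p
    rw [Real.coe_toNNReal _ (sq_nonneg _), mul_pow, Real.sq_sqrt (by positivity),
      show -(σ p ^ 2 * (2 * L)) / (2 * σ p ^ 2) = -L by field_simp, Real.exp_neg,
      Real.exp_log (by positivity)]
    field_simp
  have hbound := one_sub_sum_le_measureReal_forall_abs_lt h (s := fun p => σ p * √(2 * L))
    fun p => by have := hσ p; positivity
  have hsum : ∑ p, 2 * Real.exp (-(σ p * √(2 * L)) ^ 2 / (2 * (σ p ^ 2).toNNReal)) = δ := by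
    simp only [hterm, sum_const, card_univ, nsmul_eq_mul]
    field_simp
  rw [← ofReal_measureReal]
  exact ENNReal.ofReal_le_ofReal (hsum ▸ hbound)

end ProbabilityTheory.HasSubgaussianMGF

lemma mul_abs_sub_le_abs_image_sub_of_le_deriv {g : ℝ → ℝ} (hg : Differentiable ℝ g) {c : ℝ}
    (hderiv : ∀ x, c ≤ deriv g x) (x y : ℝ) : c * |y - x| ≤ |g y - g x| := by
  wlog hxy : x ≤ y generalizing x y
  · simpa only [abs_sub_comm] using this y x (le_of_not_ge hxy)
  rw [abs_of_nonneg (sub_nonneg.mpr hxy)]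
  exact (mul_sub_le_image_sub_of_le_deriv hg hderiv hxy).trans (le_abs_self _)

lemma abs_invFun_add_sub_le {g : ℝ → ℝ} (hg : Differentiable ℝ g) (hsurj : Function.Surjective g)
    {c : ℝ} (hc : 0 < c) (hderiv : ∀ x, c ≤ deriv g x) (x e : ℝ) :
    |Function.invFun g (g x + e) - x| ≤ |e| / c := by
  have hlower := mul_abs_sub_le_abs_image_sub_of_le_deriv hg hderiv x
    (Function.invFun g (g x + e))
  rw [Function.rightInverse_invFun hsurj, add_sub_cancel_left] at hlower
  rwa [le_div_iff₀ hc, mul_comm]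

lemma abs_sum_mul_sub_le_of_sum_mul_eq_one {ι : Type*} (s : Finset ι) {w α z e : ι → ℝ}
    (hw : ∑ j ∈ s, w j * α j = 1) (x : ℝ) (hz : ∀ j ∈ s, |z j - α j * x| ≤ e j) :
    |∑ j ∈ s, w j * z j - x| ≤ ∑ j ∈ s, |w j| * e j := by
  have hx : ∑ j ∈ s, w j * (α j * x) = x := by
    simp_rw [← mul_assoc, ← sum_mul, hw, one_mul]
  calc |∑ j ∈ s, w j * z j - x| = |∑ j ∈ s, w j * (z j - α j * x)| := by
        simp only [mul_sub, sum_sub_distrib, hx]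
    _ ≤ ∑ j ∈ s, |w j| * |z j - α j * x| := by
        simpa only [abs_mul] using abs_sum_le_sum_abs (fun j => w j * (z j - α j * x)) s
    _ ≤ ∑ j ∈ s, |w j| * e j := sum_le_sum fun j hj => by gcongr; exact hz j hj

lemma sum_abs_le_sqrt_card_mul_sqrt_sum_sq {ι : Type*} (s : Finset ι) (f : ι → ℝ) :
    ∑ j ∈ s, |f j| ≤ √(#s) * √(∑ j ∈ s, f j ^ 2) := by
  rw [← Real.sqrt_mul (Nat.cast_nonneg _)]
  refine Real.le_sqrt_of_sq_le ?_
  simpa only [sq_abs] using sq_sum_le_card_mul_sum_sq (s := s) (f := fun j => |f j|)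

noncomputable def oracleWeight {ι : Type*} [Fintype ι] (α σ : ι → ℝ) (j : ι) : ℝ :=
  α j / σ j ^ 2 / ∑ k, α k ^ 2 / σ k ^ 2

section oracleWeight

variable {ι : Type*} [Fintype ι] {α σ : ι → ℝ}

lemma sum_oracleWeight_mul_self (hS : ∑ k, α k ^ 2 / σ k ^ 2 ≠ 0) :
    ∑ j, oracleWeight α σ j * α j = 1 := by
  have hterm : ∀ j, oracleWeight α σ j * α j = α j ^ 2 / σ j ^ 2 / ∑ k, α k ^ 2 / σ k ^ 2 :=
    fun j => by rw [oracleWeight]; ring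
  simp_rw [hterm, ← sum_div]
  exact div_self hS

lemma sum_abs_oracleWeight_mul_le (hσ : ∀ j, 0 < σ j) :
    ∑ j, |oracleWeight α σ j| * σ j ≤ √(Fintype.card ι) / √(∑ k, α k ^ 2 / σ k ^ 2) := by
  set S := ∑ k, α k ^ 2 / σ k ^ 2
  have hS : 0 ≤ S := sum_nonneg fun k _ => by positivity
  have hterm : ∀ j, |oracleWeight α σ j| * σ j = |α j / σ j| / S := fun j => by
    have := hσ j
    rw [oracleWeight, abs_div, abs_div, abs_of_nonneg hS, abs_div, abs_of_pos this,
      abs_of_pos (by positivity : 0 < σ j ^ 2)]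
    field_simp
  have hCS := sum_abs_le_sqrt_card_mul_sqrt_sum_sq univ fun j => α j / σ j
  simp_rw [div_pow] at hCS
  calc ∑ j, |oracleWeight α σ j| * σ j = (∑ j, |α j / σ j|) / S := by
        simp_rw [hterm, sum_div]
    _ ≤ √(Fintype.card ι) * √S / S := by gcongr; exact hCS
    _ = √(Fintype.card ι) / √S := by
        rw [mul_div_assoc, Real.sqrt_div_self', mul_one_div]

end oracleWeight

lemma abs_sum_oracleWeight_mul_invFun_sub_le {ι : Type*} [Fintype ι] {g : ℝ → ℝ}
    (hg : Differentiable ℝ g) (hsurj : Function.Surjective g) {c : ℝ} (hc : 0 < c)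
    (hderiv : ∀ x, c ≤ deriv g x) {α σ : ι → ℝ} (hσ : ∀ j, 0 < σ j)
    (hS : ∑ k, α k ^ 2 / σ k ^ 2 ≠ 0) (x : ℝ) {e : ι → ℝ} {t : ℝ} (ht : 0 ≤ t)
    (he : ∀ j, |e j| ≤ σ j * t) :
    |∑ j, oracleWeight α σ j * Function.invFun g (g (α j * x) + e j) - x| ≤
      t * √(Fintype.card ι) / (c * √(∑ k, α k ^ 2 / σ k ^ 2)) := by
  have hz : ∀ j ∈ univ, |Function.invFun g (g (α j * x) + e j) - α j * x| ≤ σ j * t / c :=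
    fun j _ => (abs_invFun_add_sub_le hg hsurj hc hderiv _ _).trans (by gcongr; exact he j)
  calc _ ≤ ∑ j, |oracleWeight α σ j| * (σ j * t / c) :=
        abs_sum_mul_sub_le_of_sum_mul_eq_one univ (sum_oracleWeight_mul_self hS) x hz
    _ = (∑ j, |oracleWeight α σ j| * σ j) * (t / c) := by
        rw [sum_mul]; congr 1 with j; ring
    _ ≤ √(Fintype.card ι) / √(∑ k, α k ^ 2 / σ k ^ 2) * (t / c) := by
        gcongr; exact sum_abs_oracleWeight_mul_le hσ
    _ = _ := by ring

lemma sum_sub_sum_le_of_abs_sub_le {ι : Type*} {s t : Finset ι} {r r' : ι → ℝ} {B : ℝ}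
    (hB : ∀ i, |r' i - r i| ≤ B) (hle : ∑ i ∈ s, r' i ≤ ∑ i ∈ t, r' i) :
    ∑ i ∈ s, r i - ∑ i ∈ t, r i ≤ (#s + #t) * B := by
  have hs : ∑ i ∈ s, (r i - r' i) ≤ #s * B := by
    simpa using sum_le_card_nsmul s _ B fun i _ => (abs_sub_le_iff.mp (hB i)).2
  have ht : ∑ i ∈ t, (r' i - r i) ≤ #t * B := by
    simpa using sum_le_card_nsmul t _ B fun i _ => (abs_sub_le_iff.mp (hB i)).1
  rw [sum_sub_distrib] at hs ht
  linarith

theorem stmt_7_general {Ω : Type*} [MeasurableSpace Ω] (μ : Measure Ω)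
    [IsProbabilityMeasure μ]
    (n K : ℕ) (hnK : K < n)
    (r : Fin n → ℝ)
    (g : ℝ → ℝ) (c : ℝ) (hc : 0 < c)
    (hg : Differentiable ℝ g) (hsurj : Function.Surjective g)
    (hderiv : ∀ x, c ≤ deriv g x)
    (J : ℕ) (α σ : Fin J → ℝ) (hα : α ≠ 0) (hσ : ∀ j, 0 < σ j)
    (ε : Fin n → Fin J → Ω → ℝ)
    (hint : ∀ i j (t : ℝ), Integrable (fun ω => Real.exp (t * ε i j ω)) μ)
    (hmgf : ∀ i j (t : ℝ),
      ∫ ω, Real.exp (t * ε i j ω) ∂μ ≤ Real.exp ((σ j) ^ 2 * t ^ 2 / 2))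
    (f : Fin n → Fin J → Ω → ℝ)
    (hf : ∀ i j ω, f i j ω = g (α j * r i) + ε i j ω)
    (wplus : Fin J → ℝ)
    (hwplus : ∀ j, wplus j = (α j / (σ j) ^ 2) / ∑ k, (α k) ^ 2 / (σ k) ^ 2)
    (rhat : Fin n → Ω → ℝ)
    (hrhat : ∀ i ω, rhat i ω = ∑ j, wplus j * Function.invFun g (f i j ω))
    (Astar : Finset (Fin n)) (hAstar_card : Astar.card = K)
    (δ : ℝ) (hδ : δ ∈ Set.Ioo (0 : ℝ) 1) :
    ENNReal.ofReal (1 - δ) ≤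
      μ {ω | ∀ Aplus : Finset (Fin n), Aplus.card = K →
        (∀ A : Finset (Fin n), A.card = K →
          ∑ i ∈ A, rhat i ω ≤ ∑ i ∈ Aplus, rhat i ω) →
        ∑ i ∈ Astar, r i - ∑ i ∈ Aplus, r i ≤
          (2 * K / (c * Real.sqrt (∑ j, (α j) ^ 2 / (σ j) ^ 2))) *
            Real.sqrt (2 * J * Real.log (2 * n * J / δ))} := by
  obtain ⟨hδ0, hδ1⟩ := hδ
  obtain ⟨j₀, hj₀⟩ := Function.ne_iff.mp hα
  have hS : 0 < ∑ k, α k ^ 2 / σ k ^ 2 :=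
    sum_pos' (fun k _ => by positivity)
      ⟨j₀, mem_univ _, div_pos (sq_pos_of_ne_zero hj₀) (pow_pos (hσ j₀) 2)⟩
  have : Nonempty (Fin n × Fin J) := ⟨(⟨0, hnK.pos⟩, j₀)⟩
  have hgood := HasSubgaussianMGF.ofReal_one_sub_le_measure_forall_abs_lt (μ := μ)
    (X := fun p : Fin n × Fin J => ε p.1 p.2) (fun p => ⟨hint p.1 p.2, fun t => by
      rw [Real.coe_toNNReal _ (sq_nonneg _)]; exact hmgf p.1 p.2 t⟩) (fun p => hσ p.2) hδ0 hδ1.le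
  simp only [Fintype.card_prod, Fintype.card_fin, Nat.cast_mul, ← mul_assoc] at hgood
  set L := Real.log (2 * n * J / δ)
  refine hgood.trans (measure_mono fun ω hω Aplus hAplus_card hAplus_max => ?_)
  have harm : ∀ i, |rhat i ω - r i| ≤ √(2 * L) * √J / (c * √(∑ k, α k ^ 2 / σ k ^ 2)) := by
    intro i
    simp only [hrhat, hf, show wplus = oracleWeight α σ from funext hwplus]
    simpa using abs_sum_oracleWeight_mul_invFun_sub_le hg hsurj hc hderiv hσ hS.ne' (r i)
      (Real.sqrt_nonneg _) fun j => (hω (i, j)).le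
  calc _ ≤ (#Astar + #Aplus) * (√(2 * L) * √J / (c * √(∑ k, α k ^ 2 / σ k ^ 2))) :=
        sum_sub_sum_le_of_abs_sub_le harm (hAplus_max Astar hAstar_card)
    _ = _ := by
        rw [hAstar_card, hAplus_card, ← Real.sqrt_mul' _ (Nat.cast_nonneg J)]
        ring_nf

/-- Oracle suboptimality gap in the generalized linear evaluation setting
(Lemma 1): with evaluations `f_{i,j} = g(α_j r_i) + ε_{i,j}`, oracle weights
`w⁺_j = (α_j/σ_j²)/‖α·σ⁻¹‖²` and estimates `r̂_i = ∑_j w⁺_j g⁻¹(f_{i,j})`,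
with probability at least `1 - δ` every K-element set maximizing `r̂` has true
reward within `(2K/(c‖α·σ⁻¹‖))·√(2J ln(2nJ/δ))` of the best K-element set. -/
theorem stmt_7 {Ω : Type*} [MeasurableSpace Ω] (μ : Measure Ω)
    [IsProbabilityMeasure μ]
    (n K : ℕ) (hK : 1 ≤ K) (hnK : K < n)
    (C : ℝ) (hC : 0 < C) (r : Fin n → ℝ) (hr : ∀ i, r i ∈ Set.Icc 0 C)
    (g : ℝ → ℝ) (c : ℝ) (hc : 0 < c)
    (hg : Differentiable ℝ g) (hsurj : Function.Surjective g)
    (hderiv : ∀ x, c ≤ deriv g x)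
    (J : ℕ) (hJ : 1 ≤ J) (α σ : Fin J → ℝ) (hα : α ≠ 0) (hσ : ∀ j, 0 < σ j)
    (ε : Fin n → Fin J → Ω → ℝ)
    (hmeas : ∀ i j, Measurable (ε i j))
    (hindep : iIndepFun
      (fun p : Fin n × Fin J => ε p.1 p.2) μ)
    (hmean : ∀ i j, ∫ ω, ε i j ω ∂μ = 0)
    (hint : ∀ i j (t : ℝ), Integrable (fun ω => Real.exp (t * ε i j ω)) μ)
    (hmgf : ∀ i j (t : ℝ),
      ∫ ω, Real.exp (t * ε i j ω) ∂μ ≤ Real.exp ((σ j) ^ 2 * t ^ 2 / 2))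
    (f : Fin n → Fin J → Ω → ℝ)
    (hf : ∀ i j ω, f i j ω = g (α j * r i) + ε i j ω)
    (wplus : Fin J → ℝ)
    (hwplus : ∀ j, wplus j = (α j / (σ j) ^ 2) / ∑ k, (α k) ^ 2 / (σ k) ^ 2)
    (rhat : Fin n → Ω → ℝ)
    (hrhat : ∀ i ω, rhat i ω = ∑ j, wplus j * Function.invFun g (f i j ω))
    (Astar : Finset (Fin n)) (hAstar_card : Astar.card = K)
    (hAstar_max : ∀ A : Finset (Fin n), A.card = K →
      ∑ i ∈ A, r i ≤ ∑ i ∈ Astar, r i)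
    (δ : ℝ) (hδ : δ ∈ Set.Ioo (0 : ℝ) 1) :
    ENNReal.ofReal (1 - δ) ≤
      μ {ω | ∀ Aplus : Finset (Fin n), Aplus.card = K →
        (∀ A : Finset (Fin n), A.card = K →
          ∑ i ∈ A, rhat i ω ≤ ∑ i ∈ Aplus, rhat i ω) →
        ∑ i ∈ Astar, r i - ∑ i ∈ Aplus, r i ≤
          (2 * K / (c * Real.sqrt (∑ j, (α j) ^ 2 / (σ j) ^ 2))) *
            Real.sqrt (2 * J * Real.log (2 * n * J / δ))} :=
  stmt_7_general μ n K hnK r g c hc hg hsurj hderiv J α σ hα hσ ε hint hmgf f hf wplus hwplus rhat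
    hrhat Astar hAstar_card δ hδ
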